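/- arXiv:2009.02227 — 2 statements merged into one kernel-verified Lean document; each statement's English description precedes it below -/
import Mathlib

section
/- Let {X_n} (n = 0,1,2,...) be a sequence of positive real numbers satisfying the recursive inequalities X_{n+1} ≤ C b^n X_n^{1+α}, where C, b > 1 and α > 0 are given numbers. If X_0 ≤ C^{-1/α} b^{-1/α²}, then X_n converges to zero as n → ∞. -/
open Filter

/-- De Giorgi fast geometric convergence lemma. -/
theorem deGiorgi_iteration (X : ℕ → ℝ) (C b α : ℝ)
    (hC : 1 < C) (hb : 1 < b) (hα : 0 < α)
    (hpos : ∀ n, 0 < X n)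
    (hrec : ∀ n, X (n + 1) ≤ C * b ^ n * X n ^ (1 + α))
    (h0 : X 0 ≤ C ^ (-(1 / α)) * b ^ (-(1 / α ^ 2))) :
    Tendsto X atTop (nhds 0) := by
  have hC0 : (0:ℝ) < C := lt_trans one_pos hC
  have hb0 : (0:ℝ) < b := lt_trans one_pos hb
  have hα2 : α ≠ 0 := ne_of_gt hα
  set B : ℕ → ℝ := fun n => C ^ (-(1/α)) * b ^ (-(1/α^2) - n/α) with hB
  have hBpos : ∀ n, 0 < B n := fun n =>
    mul_pos (Real.rpow_pos_of_pos hC0 _) (Real.rpow_pos_of_pos hb0 _)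
  have key : ∀ n, X n ≤ B n := by
    intro n
    induction n with
    | zero => simpa [hB] using h0
    | succ n ih =>
      have h1 : X (n+1) ≤ C * b ^ n * (B n) ^ (1 + α) := by
        refine (hrec n).trans ?_
        have h1α : (0:ℝ) ≤ 1 + α := by linarith
        exact mul_le_mul_of_nonneg_left
          (Real.rpow_le_rpow (le_of_lt (hpos n)) ih h1α) (by positivity)
      refine h1.trans (le_of_eq ?_)
      have hBe : (B n) ^ (1 + α)
          = C ^ (-(1/α) * (1+α)) * b ^ ((-(1/α^2) - n/α) * (1+α)) := by
        rw [hB]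
        rw [Real.mul_rpow (le_of_lt (Real.rpow_pos_of_pos hC0 _))
          (le_of_lt (Real.rpow_pos_of_pos hb0 _)),
          ← Real.rpow_mul (le_of_lt hC0), ← Real.rpow_mul (le_of_lt hb0)]
      rw [hBe, hB, ← Real.rpow_natCast b n]
      have : C * b ^ (n:ℝ) * (C ^ (-(1/α) * (1+α)) * b ^ ((-(1/α^2) - n/α) * (1+α)))
          = C ^ (1 + -(1/α) * (1+α)) * b ^ ((n:ℝ) + (-(1/α^2) - n/α) * (1+α)) := by
        rw [Real.rpow_add hC0, Real.rpow_add hb0, Real.rpow_one]; ring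
      rw [this]
      congr 1 <;> congr 1 <;> (push_cast; field_simp; try ring)
  have hr : |b ^ (-(1/α))| < 1 := by
    rw [abs_of_pos (Real.rpow_pos_of_pos hb0 _)]
    exact Real.rpow_lt_one_of_one_lt_of_neg hb (by
      have := one_div_pos.mpr hα; linarith)
  have hBt : Tendsto B atTop (nhds 0) := by
    have : B = fun n => (C ^ (-(1/α)) * b ^ (-(1/α^2))) * (b ^ (-(1/α))) ^ n := by
      funext n
      rw [hB]
      rw [← Real.rpow_natCast (b ^ (-(1/α))) n, ← Real.rpow_mul (le_of_lt hb0),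
        mul_assoc, ← Real.rpow_add hb0]
      ring_nf
    rw [this]
    have h := (tendsto_pow_atTop_nhds_zero_of_abs_lt_one hr).const_mul
      (C ^ (-(1/α)) * b ^ (-(1/α^2)))
    rw [mul_zero] at h
    exact h
  exact squeeze_zero (fun n => le_of_lt (hpos n)) key hBt
end

section
/- Let {Y_n}_{n=0}^∞ be a sequence of nonnegative real numbers that is bounded above (equibounded) and satisfies the recursive inequalities Y_n ≤ C b^n Y_{n+1}^{1-α} for all n ≥ 0, where C, b > 1 and α ∈ (0,1) are given constants. Then Y_0 ≤ (2C / b^{1 - 1/α})^{1/α}. -/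
/-- Backward iteration lemma for equibounded sequences. -/
theorem backward_iteration (Y : ℕ → ℝ) (C b α : ℝ)
    (hC : 1 < C) (hb : 1 < b) (hα : α ∈ Set.Ioo (0 : ℝ) 1)
    (hnonneg : ∀ n, 0 ≤ Y n)
    (hbdd : ∃ M : ℝ, ∀ n, Y n ≤ M)
    (hrec : ∀ n, Y n ≤ C * b ^ n * Y (n + 1) ^ (1 - α)) :
    Y 0 ≤ (2 * C / b ^ (1 - 1 / α)) ^ (1 / α) := by
  obtain ⟨hα0, hα1⟩ := hα
  obtain ⟨M, hM⟩ := hbdd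
  by_contra hcon
  push_neg at hcon
  set K := (2 * C / b ^ (1 - 1 / α)) ^ (1 / α) with hKdef
  have hb0 : (0:ℝ) < b := by linarith
  have hC0 : (0:ℝ) < C := by linarith
  have hbr : (0:ℝ) < b ^ (1 - 1/α) := Real.rpow_pos_of_pos hb0 _
  have hK0 : (0:ℝ) < K := Real.rpow_pos_of_pos (by positivity) _
  have hlogK : Real.log K = (Real.log 2 + Real.log C - (1 - 1/α) * Real.log b) / α := by
    rw [hKdef, Real.log_rpow (by positivity), Real.log_div (by positivity) (by positivity),
      Real.log_mul (by norm_num) (by positivity), Real.log_rpow hb0]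
    ring
  have l2 : (0:ℝ) ≤ Real.log 2 := Real.log_nonneg (by norm_num)
  have hmain : ∀ n : ℕ, K * b ^ ((n:ℝ)/α) ≤ Y n := by
    intro n
    induction n with
    | zero =>
      simp only [Nat.cast_zero, zero_div, Real.rpow_zero, mul_one]
      exact hcon.le
    | succ n ih =>
      have hbn : (0:ℝ) < b ^ ((n:ℝ)/α) := Real.rpow_pos_of_pos hb0 _
      have hpos : (0:ℝ) < K * b ^ ((n:ℝ)/α) := mul_pos hK0 hbn
      have h1 : K * b ^ ((n:ℝ)/α) ≤ C * b ^ n * Y (n+1) ^ (1-α) := ih.trans (hrec n)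
      have hY1 : 0 < Y (n+1) := by
        rcases lt_or_eq_of_le (hnonneg (n+1)) with h | h
        · exact h
        · rw [← h, Real.zero_rpow (by linarith), mul_zero] at h1
          linarith
      have hlog1 : Real.log (K * b ^ ((n:ℝ)/α)) ≤
          Real.log (C * b ^ n * Y (n+1) ^ (1-α)) := Real.log_le_log hpos h1
      rw [Real.log_mul (ne_of_gt hK0) (ne_of_gt hbn), Real.log_rpow hb0,
        Real.log_mul (by positivity) (ne_of_gt (Real.rpow_pos_of_pos hY1 _)),
        Real.log_mul (ne_of_gt hC0) (by positivity), Real.log_pow,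
        Real.log_rpow hY1] at hlog1
      -- goal in log form
      have key : Real.log K + ((n:ℝ)/α) * Real.log b - Real.log C - (n:ℝ) * Real.log b
          = (1-α) * (Real.log K + (((n:ℝ)+1)/α) * Real.log b) + Real.log 2 := by
        rw [hlogK]; field_simp; ring
      have h5 : (1-α) * (Real.log K + (((n:ℝ)+1)/α) * Real.log b)
          ≤ (1-α) * Real.log (Y (n+1)) := by linarith
      have h6 : Real.log K + (((n:ℝ)+1)/α) * Real.log b ≤ Real.log (Y (n+1)) :=
        le_of_mul_le_mul_left h5 (by linarith)
      have hbn1 : (0:ℝ) < b ^ (((n:ℝ)+1)/α) := Real.rpow_pos_of_pos hb0 _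
      have h7 : Real.log (K * b ^ (((n:ℝ)+1)/α)) ≤ Real.log (Y (n+1)) := by
        rw [Real.log_mul (ne_of_gt hK0) (ne_of_gt hbn1), Real.log_rpow hb0]
        exact h6
      have := (Real.log_le_log_iff (mul_pos hK0 hbn1) hY1).mp h7
      convert this using 3
      push_cast
      ring
  -- contradiction with boundedness
  obtain ⟨n, hn⟩ := pow_unbounded_of_one_lt (M / K) hb
  have h8 : b ^ (n:ℝ) ≤ b ^ ((n:ℝ)/α) := by
    rw [Real.rpow_le_rpow_left_iff hb]
    rw [le_div_iff₀ hα0]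
    nlinarith [Nat.cast_nonneg (α := ℝ) n]
  have h9 : M < K * b ^ ((n:ℝ)/α) := by
    rw [Real.rpow_natCast] at h8
    have : M / K < b ^ ((n:ℝ)/α) := lt_of_lt_of_le hn h8
    calc M = K * (M / K) := by field_simp
    _ < K * b ^ ((n:ℝ)/α) := by exact mul_lt_mul_of_pos_left this hK0
  exact absurd (le_trans (hmain n) (hM n)) (not_le.mpr h9)
end
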